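/- arXiv:1808.09964 — 5 statements merged into one kernel-verified Lean document; each statement's English description precedes it below -/
import Mathlib

section
/- Every compression of a word x is an expansion of the condensed form of x: if y ≺ x then x* ≺ y, where x* is the condensed form of x. -/
/-- `x` is an expansion of `y`: `x = y₁^{α₁} ⋯ y_m^{α_m}` for positive integers `αᵢ`. -/
def IsExpansion {A : Type*} (x y : List A) : Prop :=
  ∃ ns : List ℕ, ns.length = y.length ∧ (∀ k ∈ ns, 0 < k) ∧
    x = (List.zipWith (fun a k => List.replicate k a) y ns).flatten

/-- A word is irreducible if it has no two equal consecutive elements. -/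
def IrreducibleWord {A : Type*} (x : List A) : Prop :=
  List.Chain' (· ≠ ·) x

attribute [local instance] Classical.propDecidable

noncomputable def condense {A : Type*} : List A → List A
  | [] => []
  | [a] => [a]
  | a :: b :: l => if a = b then condense (b :: l) else a :: condense (b :: l)

lemma condense_cons {A : Type*} (a : A) (t : List A) :
    condense (a :: t) = if t.head? = some a then condense t else a :: condense t := by
  cases t with
  | nil => simp [condense]
  | cons b l =>
    by_cases h : a = b <;> simp [condense, h, eq_comm]

lemma head?_condense {A : Type*} (t : List A) : (condense t).head? = t.head? := by
  induction t with
  | nil => rfl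
  | cons a t ih =>
    rw [condense_cons]
    split
    · rw [ih]; assumption
    · simp

lemma isExpansion_condense {A : Type*} (x : List A) : IsExpansion x (condense x) := by
  induction x with
  | nil => exact ⟨[], by simp [condense]⟩
  | cons a t ih =>
    obtain ⟨ns, hlen, hpos, heq⟩ := ih
    cases t with
    | nil => exact ⟨[1], by simp [condense]⟩
    | cons b l =>
      by_cases h : a = b
      · -- condense (a :: b :: l) = condense (b :: l)
        have hc : condense (a :: b :: l) = condense (b :: l) := by simp [condense, h]
        have hhead : (condense (b :: l)).head? = some b := by
          rw [head?_condense]; rfl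
        obtain ⟨rest, hrest⟩ : ∃ rest, condense (b :: l) = b :: rest := by
          cases hcl : condense (b :: l) with
          | nil => rw [hcl] at hhead; simp at hhead
          | cons c r => rw [hcl] at hhead; simp at hhead; exact ⟨r, by rw [hhead]⟩
        rw [hrest] at hlen heq
        obtain ⟨k, ns', rfl⟩ : ∃ k ns', ns = k :: ns' := by
          cases ns with
          | nil => simp at hlen
          | cons k ns' => exact ⟨k, ns', rfl⟩
        refine ⟨(k + 1) :: ns', ?_, ?_, ?_⟩
        · rw [hc, hrest]; simpa using hlen
        · intro m hm
          rcases List.mem_cons.1 hm with rfl | hm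
          · omega
          · exact hpos m (List.mem_cons_of_mem _ hm)
        · rw [hc, hrest]
          simp only [List.zipWith_cons_cons, List.flatten_cons, List.replicate_succ,
            List.cons_append]
          rw [h, heq]
          simp
      · refine ⟨1 :: ns, ?_, ?_, ?_⟩
        · simp [condense, h, hlen]
        · intro m hm
          rcases List.mem_cons.1 hm with rfl | hm
          · omega
          · exact hpos m hm
        · simpa [condense, h] using heq

lemma condense_of_irreducible {A : Type*} {y : List A} (h : IrreducibleWord y) :
    condense y = y := by
  induction y with
  | nil => rfl
  | cons a t ih =>
    cases t with
    | nil => rfl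
    | cons b l =>
      have hab : a ≠ b := (List.isChain_cons_cons.1 h).1
      have ht : IrreducibleWord (b :: l) := (List.isChain_cons_cons.1 h).2
      simp [condense, hab, ih ht]

lemma condense_replicate_append {A : Type*} (a : A) (t : List A) :
    ∀ k, 0 < k → condense (List.replicate k a ++ t) = condense (a :: t) := by
  intro k hk
  induction k with
  | zero => omega
  | succ k ih =>
    rcases Nat.eq_zero_or_pos k with rfl | hk'
    · simp
    · have hh : (List.replicate k a ++ t).head? = some a := by
        obtain ⟨k', rfl⟩ := Nat.exists_eq_succ_of_ne_zero hk'.ne'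
        simp [List.replicate_succ]
      rw [List.replicate_succ, List.cons_append, condense_cons, if_pos hh, ih hk']

lemma head?_flatten_zipWith {A : Type*} (y : List A) (ns : List ℕ)
    (hlen : ns.length = y.length) (hpos : ∀ k ∈ ns, 0 < k) :
    (List.zipWith (fun a k => List.replicate k a) y ns).flatten.head? = y.head? := by
  cases y with
  | nil => simp
  | cons a y' =>
    cases ns with
    | nil => simp at hlen
    | cons k ns' =>
      have hk : 0 < k := hpos k List.mem_cons_self
      obtain ⟨k', rfl⟩ := Nat.exists_eq_succ_of_ne_zero hk.ne'
      simp [List.replicate_succ]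

lemma condense_eq_of_isExpansion {A : Type*} {x y : List A} (h : IsExpansion x y) :
    condense x = condense y := by
  obtain ⟨ns, hlen, hpos, rfl⟩ := h
  induction y generalizing ns with
  | nil =>
    cases ns with
    | nil => simp
    | cons k ns' => simp at hlen
  | cons a y' ih =>
    cases ns with
    | nil => simp at hlen
    | cons k ns' =>
      have hk : 0 < k := hpos k List.mem_cons_self
      have hlen' : ns'.length = y'.length := by simpa using hlen
      have hpos' : ∀ m ∈ ns', 0 < m := fun m hm => hpos m (List.mem_cons_of_mem _ hm)
      simp only [List.zipWith_cons_cons, List.flatten_cons]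
      rw [condense_replicate_append a _ k hk, condense_cons, condense_cons,
        head?_flatten_zipWith y' ns' hlen' hpos', ih ns' hlen' hpos']

/-- Every compression of `x` is an expansion of the condensed form of `x`. -/
theorem compression_isExpansion_condensed {A : Type*} {x y xstar : List A}
    (hstar : IrreducibleWord xstar) (hx : IsExpansion x xstar)
    (hy : IsExpansion x y) : IsExpansion y xstar := by
  have h1 : condense x = xstar := by
    rw [condense_eq_of_isExpansion hx, condense_of_irreducible hstar]
  have h2 : condense y = xstar := by
    rw [← condense_eq_of_isExpansion hy, h1]
  rw [← h2]
  exact isExpansion_condense y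
end

section
/- The condensed form x* of a word x is strictly shorter than every other compression of x: |x*| < |y| for all compressions y of x with y ≠ x*. -/
private lemma destutter'_replicate_append {A : Type*} [DecidableEq A] (a : A) :
    ∀ (m : ℕ) (t : List A),
      List.destutter' (· ≠ ·) a (List.replicate m a ++ t) = List.destutter' (· ≠ ·) a t := by
  intro m
  induction m with
  | zero => intro t; simp
  | succ m ih =>
    intro t
    rw [List.replicate_succ, List.cons_append,
      List.destutter'_cons_neg _ (show ¬(a ≠ a) by simp)]
    exact ih t

private lemma destutter'_expansion {A : Type*} [DecidableEq A] :
    ∀ (y : List A) (ns : List ℕ) (a : A), ns.length = y.length → (∀ k ∈ ns, 0 < k) →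
      List.destutter' (· ≠ ·) a
        (List.zipWith (fun a k => List.replicate k a) y ns).flatten
        = List.destutter' (· ≠ ·) a y := by
  intro y
  induction y with
  | nil =>
    intro ns a hlen _
    match ns with
    | [] => simp
    | _ :: _ => simp at hlen
  | cons b y' ih =>
    intro ns a hlen hpos
    match ns with
    | [] => simp at hlen
    | k :: ns' =>
      obtain ⟨m, rfl⟩ : ∃ m, k = m + 1 := by
        have := hpos k (by simp)
        exact ⟨k - 1, by omega⟩
      have hw : (List.zipWith (fun a k => List.replicate k a) (b :: y') ((m+1) :: ns')).flatten
          = b :: (List.replicate m b ++ (List.zipWith (fun a k => List.replicate k a) y' ns').flatten) := by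
        simp [List.replicate_succ]
      rw [hw]
      have hrest := ih ns' b (by simpa using hlen) (fun k hk => hpos k (by simp [hk]))
      by_cases hab : a ≠ b
      · rw [List.destutter'_cons_pos _ hab, List.destutter'_cons_pos _ hab,
          destutter'_replicate_append, hrest]
      · rw [List.destutter'_cons_neg _ hab, List.destutter'_cons_neg _ hab]
        push_neg at hab
        subst hab
        rw [destutter'_replicate_append,
          ih ns' a (by simpa using hlen) (fun k hk => hpos k (by simp [hk]))]

private lemma destutter_expansion {A : Type*} [DecidableEq A] {x y : List A}
    (h : IsExpansion x y) :
    List.destutter (· ≠ ·) x = List.destutter (· ≠ ·) y := by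
  obtain ⟨ns, hlen, hpos, rfl⟩ := h
  match y, ns with
  | [], [] => simp
  | [], _ :: _ => simp at hlen
  | b :: y', [] => simp at hlen
  | b :: y', k :: ns' =>
    obtain ⟨m, rfl⟩ : ∃ m, k = m + 1 := by
      have := hpos k (by simp)
      exact ⟨k - 1, by omega⟩
    have hw : (List.zipWith (fun a k => List.replicate k a) (b :: y') ((m+1) :: ns')).flatten
        = b :: (List.replicate m b ++ (List.zipWith (fun a k => List.replicate k a) y' ns').flatten) := by
      simp [List.replicate_succ]
    rw [hw, List.destutter_cons', List.destutter_cons', destutter'_replicate_append,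
      destutter'_expansion y' ns' b (by simpa using hlen) (fun k hk => hpos k (by simp [hk]))]

/-- The condensed form is strictly shorter than every other compression. -/
theorem condensed_form_shortest {A : Type*} {x xstar : List A}
    (hstar : IrreducibleWord xstar) (hx : IsExpansion x xstar) :
    ∀ y : List A, IsExpansion x y → y ≠ xstar → xstar.length < y.length := by
  classical
  intro y hy hne
  have h1 : List.destutter (· ≠ ·) x = xstar := by
    rw [destutter_expansion hx, List.destutter_of_isChain _ _ hstar]
  have h2 : List.destutter (· ≠ ·) y = xstar := by
    rw [← destutter_expansion hy, h1]
  have hsub : List.Sublist xstar y := h2 ▸ List.destutter_sublist _ y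
  refine lt_of_le_of_ne hsub.length_le ?_
  intro hlen
  exact hne (hsub.eq_of_length hlen).symm
end

section
/- For any two warping functions φ: [m] → [n] and φ': [m'] → [n] with common codomain, there exist warping functions θ: [ℓ] → [m] and θ': [ℓ] → [m'] with common domain, for some ℓ ≥ max(m, m'), such that φ ∘ θ = φ' ∘ θ'. -/
open Finset

/-- A warping function is a surjective, monotonically increasing function between
initial segments of the positive integers (modeled as `Fin ℓ → Fin n`). -/
def IsWarpingFn {l n : ℕ} (φ : Fin l → Fin n) : Prop :=
  Function.Surjective φ ∧ Monotone φ

/-- Number of indices `i` with `φ i < k`. -/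
def warpA {m n : ℕ} (φ : Fin m → Fin n) (k : ℕ) : ℕ :=
  #(Finset.univ.filter fun i => (φ i : ℕ) < k)

lemma warpA_mono {m n : ℕ} (φ : Fin m → Fin n) : Monotone (warpA φ) := by
  intro k k' h
  apply card_le_card
  intro i hi
  simp only [mem_filter, mem_univ, true_and] at hi ⊢
  omega

lemma warpA_zero {m n : ℕ} (φ : Fin m → Fin n) : warpA φ 0 = 0 := by
  simp [warpA]

lemma warpA_top {m n : ℕ} (φ : Fin m → Fin n) : warpA φ n = m := by
  have : (Finset.univ.filter fun i => (φ i : ℕ) < n) = Finset.univ := by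
    apply filter_true_of_mem
    intro i _
    exact (φ i).is_lt
  simp [warpA, this]

lemma warpA_char {m n : ℕ} {φ : Fin m → Fin n} (hm : Monotone φ) (i : Fin m) (k : ℕ) :
    (φ i : ℕ) < k ↔ (i : ℕ) < warpA φ k := by
  constructor
  · intro h
    have hsub : Finset.Iic i ⊆ Finset.univ.filter fun j => (φ j : ℕ) < k := by
      intro j hj
      simp only [mem_filter, mem_univ, true_and]
      have : φ j ≤ φ i := hm (mem_Iic.mp hj)
      have : (φ j : ℕ) ≤ (φ i : ℕ) := this
      omega
    have := card_le_card hsub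
    rw [Fin.card_Iic] at this
    exact lt_of_lt_of_le (Nat.lt_succ_self _) this
  · intro h
    by_contra hk
    push_neg at hk
    have hsub : (Finset.univ.filter fun j => (φ j : ℕ) < k) ⊆ Finset.Iio i := by
      intro j hj
      simp only [mem_filter, mem_univ, true_and] at hj
      rw [mem_Iio]
      by_contra hji
      push_neg at hji
      have : φ i ≤ φ j := hm hji
      have : (φ i : ℕ) ≤ (φ j : ℕ) := this
      omega
    have := card_le_card hsub
    rw [Fin.card_Iio] at this
    exact absurd h (by unfold warpA; omega)

/-- Key block construction: given a monotone surjection `φ : Fin m → Fin n` and a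
"block boundary" function `B` whose blocks are at least as large as the fibers of `φ`,
there is a warping function `θ` such that `φ ∘ θ` is the step function determined by `B`. -/
lemma warp_block {m n l : ℕ} (φ : Fin m → Fin n) (hs : Function.Surjective φ)
    (hm : Monotone φ) (B : ℕ → ℕ) (hB0 : B 0 = 0) (hBn : B n = l) (hBmono : Monotone B)
    (hBbig : ∀ k, k < n → warpA φ (k + 1) - warpA φ k ≤ B (k + 1) - B k) :
    ∃ θ : Fin l → Fin m, IsWarpingFn θ ∧
      ∀ t : Fin l, (φ (θ t) : ℕ) = Nat.findGreatest (fun k => B k ≤ (t : ℕ)) n := by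
  classical
  set v : Fin l → ℕ := fun t => Nat.findGreatest (fun k => B k ≤ (t : ℕ)) n with hvdef
  have hfib : ∀ k, k < n → warpA φ k < warpA φ (k + 1) := by
    intro k hk
    obtain ⟨i, hi⟩ := hs ⟨k, hk⟩
    have h1 : (i : ℕ) < warpA φ (k + 1) :=
      (warpA_char hm i (k + 1)).1 (by rw [hi]; simp)
    have h2 : warpA φ k ≤ (i : ℕ) := by
      by_contra hc
      push_neg at hc
      have := (warpA_char hm i k).2 hc
      rw [hi] at this
      simp at this
    omega
  have hv1 : ∀ t : Fin l, B (v t) ≤ (t : ℕ) := by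
    intro t
    exact Nat.findGreatest_spec (P := fun k => B k ≤ (t : ℕ)) (Nat.zero_le n)
      (show B 0 ≤ (t:ℕ) by rw [hB0]; exact Nat.zero_le _)
  have hvlt : ∀ t : Fin l, v t < n := by
    intro t
    have hle : v t ≤ n := Nat.findGreatest_le n
    rcases lt_or_eq_of_le hle with h | h
    · exact h
    · have := hv1 t
      rw [h, hBn] at this
      exact absurd t.is_lt (by omega)
  have hv2 : ∀ t : Fin l, (t : ℕ) < B (v t + 1) := by
    intro t
    by_contra hc
    push_neg at hc
    have h2 : v t + 1 ≤ v t :=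
      Nat.le_findGreatest (P := fun k => B k ≤ (t : ℕ)) (Nat.succ_le_of_lt (hvlt t)) hc
    omega
  set θn : Fin l → ℕ := fun t =>
    min (warpA φ (v t) + ((t : ℕ) - B (v t))) (warpA φ (v t + 1) - 1) with hθdef
  have hθk : ∀ t : Fin l, warpA φ (v t) ≤ θn t ∧ θn t < warpA φ (v t + 1) := by
    intro t
    have := hfib (v t) (hvlt t)
    constructor <;> simp only [hθdef] <;> omega
  have hθlt : ∀ t : Fin l, θn t < m := by
    intro t
    have h1 := (hθk t).2
    have h2 : warpA φ (v t + 1) ≤ warpA φ n := warpA_mono φ (hvlt t)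
    rw [warpA_top] at h2
    omega
  refine ⟨fun t => ⟨θn t, hθlt t⟩, ⟨?_, ?_⟩, ?_⟩
  · -- surjectivity
    intro i
    set k := (φ i : ℕ) with hkdef
    have hkn : k < n := (φ i).is_lt
    have hiu : (i : ℕ) < warpA φ (k + 1) := (warpA_char hm i (k + 1)).1 (by omega)
    have hil : warpA φ k ≤ (i : ℕ) := by
      by_contra hc
      push_neg at hc
      have := (warpA_char hm i k).2 hc
      omega
    have hb1 : B k ≤ B (k + 1) := hBmono (by omega : k ≤ k + 1)
    have hb2 : B (k + 1) ≤ B n := hBmono hkn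
    have hbig := hBbig k hkn
    set tn : ℕ := B k + ((i : ℕ) - warpA φ k) with htdef
    have htl : tn < l := by omega
    refine ⟨⟨tn, htl⟩, ?_⟩
    have hvt : v ⟨tn, htl⟩ = k := by
      apply le_antisymm
      · by_contra hc
        push_neg at hc
        have h1 := hv1 ⟨tn, htl⟩
        have h2 : B (k + 1) ≤ B (v ⟨tn, htl⟩) := hBmono hc
        simp only [Fin.val_mk] at h1
        omega
      · exact Nat.le_findGreatest (P := fun k' => B k' ≤ ((⟨tn, htl⟩ : Fin l) : ℕ))
          (le_of_lt hkn) (by simp only [Fin.val_mk]; omega)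
    apply Fin.ext
    simp only [hθdef, hvt, Fin.val_mk]
    omega
  · -- monotonicity
    intro t t' h
    have ht : (t : ℕ) ≤ (t' : ℕ) := h
    have hvm : v t ≤ v t' :=
      Nat.findGreatest_mono (fun k hk => le_trans hk ht) (le_refl n)
    rw [Fin.mk_le_mk]
    rcases lt_or_eq_of_le hvm with hlt | heq
    · have h1 : θn t ≤ warpA φ (v t + 1) - 1 := min_le_right _ _
      have h2 : warpA φ (v t + 1) ≤ warpA φ (v t') := warpA_mono φ hlt
      have h3 := (hθk t').1
      have h4 := hfib (v t) (hvlt t)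
      omega
    · simp only [hθdef, heq]
      have := hv1 t
      omega
  · -- composition value
    intro t
    have h1 := (hθk t).1
    have h2 := (hθk t).2
    have hu : (φ ⟨θn t, hθlt t⟩ : ℕ) < v t + 1 :=
      (warpA_char hm ⟨θn t, hθlt t⟩ (v t + 1)).2 (by simpa using h2)
    have hl : ¬ ((φ ⟨θn t, hθlt t⟩ : ℕ) < v t) := by
      intro hc
      have := (warpA_char hm ⟨θn t, hθlt t⟩ (v t)).1 hc
      simp only [Fin.val_mk] at this
      omega
    show (φ ⟨θn t, hθlt t⟩ : ℕ) = v t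
    omega

/-- Any two warping functions with common codomain can be equalized by composing
with suitable warping functions of a common domain. -/
theorem warpingFn_equalize {m m' n : ℕ} (φ : Fin m → Fin n) (φ' : Fin m' → Fin n)
    (hφ : IsWarpingFn φ) (hφ' : IsWarpingFn φ') :
    ∃ (l : ℕ) (θ : Fin l → Fin m) (θ' : Fin l → Fin m'),
      max m m' ≤ l ∧ IsWarpingFn θ ∧ IsWarpingFn θ' ∧ φ ∘ θ = φ' ∘ θ' := by
  obtain ⟨hφs, hφm⟩ := hφ
  obtain ⟨hφs', hφm'⟩ := hφ'
  set B : ℕ → ℕ := fun k => warpA φ k + warpA φ' k with hBdef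
  have hB0 : B 0 = 0 := by simp [hBdef, warpA_zero]
  have hBn : B n = m + m' := by simp [hBdef, warpA_top]
  have hBmono : Monotone B := fun k k' h =>
    Nat.add_le_add (warpA_mono φ h) (warpA_mono φ' h)
  obtain ⟨θ, hθw, hθv⟩ := warp_block φ hφs hφm B hB0 hBn hBmono
    (fun k hk => by
      have h1 := warpA_mono φ (by omega : k ≤ k + 1)
      have h2 := warpA_mono φ' (by omega : k ≤ k + 1)
      simp only [hBdef]
      omega)
  obtain ⟨θ', hθw', hθv'⟩ := warp_block φ' hφs' hφm' B hB0 hBn hBmono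
    (fun k hk => by
      have h1 := warpA_mono φ (by omega : k ≤ k + 1)
      have h2 := warpA_mono φ' (by omega : k ≤ k + 1)
      simp only [hBdef]
      omega)
  refine ⟨m + m', θ, θ', by omega, hθw, hθw', ?_⟩
  funext t
  simp only [Function.comp_apply]
  apply Fin.ext
  rw [hθv t, hθv' t]
end

section
/- Minimizing the warping cost over all warping walks yields the same value as minimizing over all warping paths: for time series x of length m and y of length n, dtw(x,y) = min over warping walks w of order m×n of the square root of Σ_{(i,j) ∈ w} (x_i − y_j)². -/
/-- A warping walk of order `m × n` (1-indexed points): starts at `(1,1)`, ends at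
`(m,n)`, and consecutive differences lie in `{0,1} × {0,1}`. -/
def IsWarpingWalk (m n : ℕ) (w : List (ℕ × ℕ)) : Prop :=
  w.head? = some (1, 1) ∧ w.getLast? = some (m, n) ∧
    List.Chain' (fun a b => (b.1 = a.1 ∨ b.1 = a.1 + 1) ∧ (b.2 = a.2 ∨ b.2 = a.2 + 1)) w

/-- A warping path is a warping walk whose consecutive points are distinct, i.e.
consecutive differences lie in `{0,1} × {0,1} \ {(0,0)}`. -/
def IsWarpingPath (m n : ℕ) (p : List (ℕ × ℕ)) : Prop :=
  IsWarpingWalk m n p ∧ List.Chain' (· ≠ ·) p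

/-- The cost of warping time series `x` and `y` along `w`:
`Σ_{(i,j) ∈ w} (x_i − y_j)²` (1-indexed). -/
noncomputable def warpCost (x y : List ℝ) (w : List (ℕ × ℕ)) : ℝ :=
  (w.map (fun q => (x.getD (q.1 - 1) 0 - y.getD (q.2 - 1) 0) ^ 2)).sum

/-- The dtw-distance: the least value of `√(warpCost x y p)` over all warping
paths `p` of order `|x| × |y|`. -/
noncomputable def dtw (x y : List ℝ) : ℝ :=
  sInf {r : ℝ | ∃ p, IsWarpingPath x.length y.length p ∧ r = Real.sqrt (warpCost x y p)}

/-- Remove consecutive duplicates. -/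
def dedup' : List (ℕ × ℕ) → List (ℕ × ℕ)
  | [] => []
  | [a] => [a]
  | a :: b :: l => if a = b then dedup' (b :: l) else a :: dedup' (b :: l)

lemma dedup'_ne_nil (a : ℕ × ℕ) (l : List (ℕ × ℕ)) : dedup' (a :: l) ≠ [] := by
  induction l generalizing a with
  | nil => simp [dedup']
  | cons b l ih =>
    rw [dedup']
    split
    · exact ih b
    · simp

lemma dedup'_head? (w : List (ℕ × ℕ)) : (dedup' w).head? = w.head? := by
  induction w with
  | nil => rfl
  | cons a l ih =>
    cases l with
    | nil => rfl
    | cons b l =>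
      rw [dedup']
      split
      · rename_i h; rw [ih]; simp [h]
      · rfl

lemma dedup'_getLast? (w : List (ℕ × ℕ)) : (dedup' w).getLast? = w.getLast? := by
  induction w with
  | nil => rfl
  | cons a l ih =>
    cases l with
    | nil => rfl
    | cons b l =>
      rw [dedup']
      split
      · rw [ih, List.getLast?_cons_cons]
      · obtain ⟨c, t, hct⟩ := List.exists_cons_of_ne_nil (dedup'_ne_nil b l)
        rw [hct, List.getLast?_cons_cons, ← hct, ih, List.getLast?_cons_cons]

lemma dedup'_chain'_ne (w : List (ℕ × ℕ)) : (dedup' w).Chain' (· ≠ ·) := by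
  induction w with
  | nil => simp [dedup', List.Chain', List.isChain_nil]
  | cons a l ih =>
    cases l with
    | nil => simp [dedup', List.Chain', List.isChain_singleton]
    | cons b l =>
      rw [dedup']
      split
      · exact ih
      · rename_i h
        refine List.isChain_cons.2 ⟨?_, ih⟩
        intro y hy
        rw [dedup'_head?] at hy
        simp at hy
        exact hy ▸ h

lemma dedup'_chain'_of (R : ℕ × ℕ → ℕ × ℕ → Prop) (w : List (ℕ × ℕ))
    (h : w.Chain' R) : (dedup' w).Chain' R := by
  induction w with
  | nil => simp [dedup', List.Chain', List.isChain_nil]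
  | cons a l ih =>
    cases l with
    | nil => simp [dedup', List.Chain', List.isChain_singleton]
    | cons b l =>
      simp only [List.Chain', List.isChain_cons_cons] at h
      rw [dedup']
      split
      · exact ih h.2
      · refine List.isChain_cons.2 ⟨?_, ih h.2⟩
        intro y hy
        rw [dedup'_head?] at hy
        simp at hy
        exact hy ▸ h.1

lemma dedup'_sublist (w : List (ℕ × ℕ)) : List.Sublist (dedup' w) w := by
  induction w with
  | nil => simp [dedup']
  | cons a l ih =>
    cases l with
    | nil => simp [dedup']
    | cons b l =>
      rw [dedup']
      split
      · exact ih.trans (List.sublist_cons_self _ _)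
      · exact ih.cons₂ a

lemma warpCost_dedup'_le (x y : List ℝ) (w : List (ℕ × ℕ)) :
    warpCost x y (dedup' w) ≤ warpCost x y w := by
  apply List.Sublist.sum_le_sum
  · exact (dedup'_sublist w).map _
  · intro r hr
    simp only [List.mem_map] at hr
    obtain ⟨q, _, hq⟩ := hr
    rw [← hq]
    positivity

lemma dedup'_isWarpingPath (m n : ℕ) (w : List (ℕ × ℕ)) (hw : IsWarpingWalk m n w) :
    IsWarpingPath m n (dedup' w) := by
  obtain ⟨h1, h2, h3⟩ := hw
  exact ⟨⟨(dedup'_head? w).trans h1, (dedup'_getLast? w).trans h2,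
    dedup'_chain'_of _ w h3⟩, dedup'_chain'_ne w⟩

/-- Minimizing the warping cost over warping walks yields the dtw-distance. -/
theorem dtw_eq_inf_over_walks (x y : List ℝ) :
    dtw x y =
      sInf {r : ℝ | ∃ w, IsWarpingWalk x.length y.length w ∧
        r = Real.sqrt (warpCost x y w)} := by
  set m := x.length
  set n := y.length
  set S := {r : ℝ | ∃ p, IsWarpingPath m n p ∧ r = Real.sqrt (warpCost x y p)} with hS
  set T := {r : ℝ | ∃ w, IsWarpingWalk m n w ∧ r = Real.sqrt (warpCost x y w)} with hT
  have hsub : S ⊆ T := by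
    rintro r ⟨p, hp, rfl⟩
    exact ⟨p, hp.1, rfl⟩
  have hbddS : BddBelow S := ⟨0, by rintro r ⟨p, hp, rfl⟩; exact Real.sqrt_nonneg _⟩
  have hbddT : BddBelow T := ⟨0, by rintro r ⟨w, hw, rfl⟩; exact Real.sqrt_nonneg _⟩
  have key : ∀ r ∈ T, ∃ r' ∈ S, r' ≤ r := by
    rintro r ⟨w, hw, rfl⟩
    exact ⟨Real.sqrt (warpCost x y (dedup' w)), ⟨dedup' w, dedup'_isWarpingPath m n w hw, rfl⟩,
      Real.sqrt_le_sqrt (warpCost_dedup'_le x y w)⟩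
  show sInf S = sInf T
  rcases Set.eq_empty_or_nonempty T with hTe | hTne
  · have hSe : S = ∅ := Set.subset_empty_iff.1 (hTe ▸ hsub)
    rw [hTe, hSe]
  · obtain ⟨r, hr⟩ := hTne
    obtain ⟨r', hr', _⟩ := key r hr
    have hSne : S.Nonempty := ⟨r', hr'⟩
    refine le_antisymm ?_ (csInf_le_csInf hbddT hSne hsub)
    refine le_csInf ⟨r, hr⟩ ?_
    intro b hb
    obtain ⟨b', hb', hle⟩ := key b hb
    exact (csInf_le hbddS hb').trans hle
end

section
/- If a time series x is an expansion of a time series y, then dtw(x, z) ≥ dtw(y, z) for all time series z, and dtw(x, y) = 0. -/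
private def ddup : List (ℕ × ℕ) → List (ℕ × ℕ)
  | [] => []
  | [a] => [a]
  | a :: b :: l => if a = b then ddup (b :: l) else a :: ddup (b :: l)

private lemma ddup_head? : ∀ l : List (ℕ × ℕ), (ddup l).head? = l.head?
  | [] => rfl
  | [a] => rfl
  | a :: b :: l => by
    rw [ddup]
    split
    · rename_i h; rw [ddup_head? (b :: l)]; simp [h]
    · rfl

private lemma ddup_getLast? : ∀ l : List (ℕ × ℕ), (ddup l).getLast? = l.getLast?
  | [] => rfl
  | [a] => rfl
  | a :: b :: l => by
    rw [ddup]
    split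
    · rw [ddup_getLast? (b :: l)]; simp [List.getLast?_cons_cons]
    · have hne : ddup (b :: l) ≠ [] := by
        intro h
        have := ddup_head? (b :: l)
        rw [h] at this
        simp at this
      rw [List.getLast?_cons_cons]
      cases hd : ddup (b :: l) with
      | nil => exact absurd hd hne
      | cons c t => rw [List.getLast?_cons_cons, ← hd, ddup_getLast? (b :: l)]

private lemma ddup_sublist : ∀ l : List (ℕ × ℕ), (ddup l).Sublist l
  | [] => List.Sublist.refl _
  | [a] => List.Sublist.refl _
  | a :: b :: l => by
    rw [ddup]
    split
    · exact (ddup_sublist (b :: l)).cons _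
    · exact (ddup_sublist (b :: l)).cons₂ _

private lemma ddup_ne : ∀ l : List (ℕ × ℕ), List.Chain' (· ≠ ·) (ddup l)
  | [] => List.isChain_nil
  | [a] => List.isChain_singleton a
  | a :: b :: l => by
    rw [ddup]
    split
    · exact ddup_ne (b :: l)
    · rename_i h
      rw [List.Chain', List.isChain_cons]
      refine ⟨?_, ddup_ne (b :: l)⟩
      intro y hy
      rw [ddup_head? (b :: l)] at hy
      simp at hy
      subst hy
      exact h

private lemma ddup_chain' {R : ℕ × ℕ → ℕ × ℕ → Prop} :
    ∀ l : List (ℕ × ℕ), List.Chain' R l → List.Chain' R (ddup l)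
  | [], h => List.isChain_nil
  | [a], h => List.isChain_singleton a
  | a :: b :: l, h => by
    rw [ddup]
    split
    · exact ddup_chain' (b :: l) h.tail
    · rw [List.Chain', List.isChain_cons]
      refine ⟨?_, ddup_chain' (b :: l) h.tail⟩
      intro y hy
      rw [ddup_head? (b :: l)] at hy
      simp at hy
      subst hy
      exact (List.isChain_cons_cons.mp h).1


private lemma chain'_replicate_of_rel {α : Type*} {R : α → α → Prop} {a : α} (h : R a a) :
    ∀ k : ℕ, List.Chain' R (List.replicate k a)
  | 0 => List.isChain_nil
  | 1 => List.isChain_singleton a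
  | (k+2) => by
    rw [List.replicate_succ, List.Chain', List.isChain_cons]
    refine ⟨?_, chain'_replicate_of_rel h (k+1)⟩
    intro y hy
    simp [List.replicate_succ] at hy
    subst hy; exact h

private lemma expansion_F {y : List ℝ} :
    ∀ {ns : List ℕ}, ns.length = y.length → (∀ k ∈ ns, 0 < k) →
    ∃ F : List ℕ,
      F.length = ((List.zipWith (fun a k => List.replicate k a) y ns).flatten).length ∧
      (∀ i < F.length, F.getD i 0 < y.length ∧
        ((List.zipWith (fun a k => List.replicate k a) y ns).flatten).getD i 0
          = y.getD (F.getD i 0) 0) ∧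
      (y ≠ [] → F.head? = some 0) ∧
      (y ≠ [] → F.getLast? = some (y.length - 1)) ∧
      List.Chain' (fun a b => b = a ∨ b = a + 1) F := by
  induction y with
  | nil =>
    intro ns hlen hpos
    exact ⟨[], by simp, by simp, by simp, by simp, List.isChain_nil⟩
  | cons a y' ih =>
    intro ns hlen hpos
    match ns with
    | [] => simp at hlen
    | k :: ns' =>
      simp only [List.length_cons, Nat.succ_inj] at hlen
      have hk : 0 < k := hpos k (by simp)
      obtain ⟨F', hF'len, hF'val, hF'head, hF'last, hF'chain⟩ :=
        ih hlen (fun m hm => hpos m (by simp [hm]))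
      set x' := (List.zipWith (fun a k => List.replicate k a) y' ns').flatten with hx'
      have hflat : (List.zipWith (fun a k => List.replicate k a) (a :: y') (k :: ns')).flatten
          = List.replicate k a ++ x' := by simp [hx']
      refine ⟨List.replicate k 0 ++ F'.map (· + 1), ?_, ?_, ?_, ?_, ?_⟩
      · rw [hflat]; simp [hF'len]
      · intro i hi
        rw [hflat]
        simp only [List.length_append, List.length_replicate, List.length_map, hF'len] at hi
        by_cases hik : i < k
        · rw [List.getD_append _ _ _ _ (by simpa using hik),
            List.getD_append _ _ _ _ (by simpa using hik)]
          simp [List.getD_eq_getElem _ _ (by simpa using hik : i < (List.replicate k a).length),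
            List.getD_eq_getElem _ _ (by simpa using hik : i < (List.replicate k (0:ℕ)).length),
            hik]
        · push_neg at hik
          rw [List.getD_append_right _ _ _ _ (by simpa using hik),
            List.getD_append_right _ _ _ _ (by simpa using hik)]
          simp only [List.length_replicate]
          have hik2 : i - k < F'.length := by rw [hF'len]; omega
          have := hF'val (i - k) hik2
          rw [List.getD_eq_getElem (F'.map (· + 1)) _ (by simpa using hik2), List.getElem_map]
          constructor
          · simp only [List.length_cons]
            have h1 := this.1
            rw [List.getD_eq_getElem _ _ hik2] at h1
            omega
          · rw [List.getD_cons_succ, ← List.getD_eq_getElem _ _ hik2, this.2]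
      · intro _
        match k, hk with
        | (k+1), _ => simp [List.replicate_succ]
      · intro _
        rw [List.getLast?_append]
        by_cases hy' : y' = []
        · subst hy'
          have hns' : ns' = [] := List.eq_nil_of_length_eq_zero hlen
          have hF'nil : F' = [] := List.eq_nil_of_length_eq_zero (by simp [hF'len, hx', hns'])
          subst hF'nil
          match k, hk with
          | (k+1), _ => simp [List.getLast?_concat, List.replicate_succ']
        · rw [List.getLast?_map, hF'last hy']
          have h1 : 1 ≤ y'.length := List.length_pos_iff.mpr hy'
          have h2 : y'.length - 1 + 1 = (a :: y').length - 1 := by simp; omega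
          simp only [Option.map_some]
          rw [h2]
          simp
      · rw [List.Chain', List.isChain_append]
        refine ⟨chain'_replicate_of_rel (R := fun a b => b = a ∨ b = a + 1) (Or.inl rfl) k,
          ?_, ?_⟩
        · rw [List.isChain_map]
          exact hF'chain.imp (fun a b h => by omega)
        · intro u hu v hv
          rw [List.head?_map] at hv
          by_cases hy' : y' = []
          · have hns' : ns' = [] := List.eq_nil_of_length_eq_zero (by simpa [hy'] using hlen)
            have hF'nil : F' = [] := List.eq_nil_of_length_eq_zero (by simp [hF'len, hx', hns'])
            simp [hF'nil] at hv
          · rw [hF'head hy'] at hv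
            simp only [Option.map_some, Option.mem_def, Option.some.injEq] at hv
            have hu' : u = 0 := by
              have := List.mem_of_mem_getLast? hu
              simpa using List.eq_of_mem_replicate this
            omega




private lemma walk_bounds {m n : ℕ} {w : List (ℕ × ℕ)} (h : IsWarpingWalk m n w) :
    ∀ q ∈ w, 1 ≤ q.1 ∧ q.1 ≤ m ∧ 1 ≤ q.2 ∧ q.2 ≤ n := by
  obtain ⟨hh, hl, hc⟩ := h
  have hmono : List.Chain' (fun a b : ℕ × ℕ => a.1 ≤ b.1 ∧ a.2 ≤ b.2) w :=
    hc.imp (fun a b hab => ⟨by omega, by omega⟩)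
  have : Trans (fun a b : ℕ × ℕ => a.1 ≤ b.1 ∧ a.2 ≤ b.2) (fun a b : ℕ × ℕ => a.1 ≤ b.1 ∧ a.2 ≤ b.2) (fun a b : ℕ × ℕ => a.1 ≤ b.1 ∧ a.2 ≤ b.2) :=
    ⟨fun hab hbc => ⟨le_trans hab.1 hbc.1, le_trans hab.2 hbc.2⟩⟩
  have hpw : List.Pairwise (fun a b : ℕ × ℕ => a.1 ≤ b.1 ∧ a.2 ≤ b.2) w :=
    List.isChain_iff_pairwise.mp hmono
  intro q hq
  have hlow : 1 ≤ q.1 ∧ 1 ≤ q.2 := by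
    obtain ⟨t, ht⟩ : ∃ t, w = (1, 1) :: t := by
      cases w with
      | nil => simp at hh
      | cons a t =>
        rw [List.head?_cons] at hh
        exact ⟨t, by rw [Option.some.inj hh]⟩
    subst ht
    rcases List.mem_cons.mp hq with rfl | hq'
    · exact ⟨le_refl _, le_refl _⟩
    · have := (List.pairwise_cons.mp hpw).1 q hq'
      exact ⟨this.1, this.2⟩
  have hhigh : q.1 ≤ m ∧ q.2 ≤ n := by
    obtain ⟨w', hw'⟩ : ∃ w', w = w' ++ [(m, n)] := by
      rcases List.eq_nil_or_concat w with rfl | ⟨w', a, rfl⟩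
      · simp at hh
      · rw [List.concat_eq_append, List.getLast?_concat] at hl
        exact ⟨w', by rw [List.concat_eq_append, Option.some.inj hl]⟩
    subst hw'
    rw [List.pairwise_append] at hpw
    rcases List.mem_append.mp hq with hq' | hq'
    · have := hpw.2.2 q hq' (m, n) (by simp)
      exact ⟨this.1, this.2⟩
    · simp at hq'
      subst hq'
      exact ⟨le_refl _, le_refl _⟩
  exact ⟨hlow.1, hhigh.1, hlow.2, hhigh.2⟩

/-- no walk when a target coordinate is 0 -/
private lemma walk_pos {m n : ℕ} {w : List (ℕ × ℕ)} (h : IsWarpingWalk m n w) :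
    1 ≤ m ∧ 1 ≤ n := by
  have hmem : (1, 1) ∈ w := by
    obtain ⟨hh, -, -⟩ := h
    cases w with
    | nil => simp at hh
    | cons a t =>
      rw [List.head?_cons] at hh
      rw [← Option.some.inj hh]
      exact List.mem_cons_self
  have := walk_bounds h (1, 1) hmem
  exact ⟨by omega, by omega⟩

/-- the staircase path -/
private lemma stair_exists (m n : ℕ) (hm : 1 ≤ m) (hn : 1 ≤ n) :
    ∃ p, IsWarpingPath m n p := by
  refine ⟨(List.range m).map (fun i => (i + 1, 1)) ++
    (List.range (n - 1)).map (fun j => (m, j + 2)), ⟨?_, ?_, ?_⟩, ?_⟩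
  · obtain ⟨m', rfl⟩ : ∃ m', m = m' + 1 := ⟨m - 1, by omega⟩
    rw [List.head?_append_of_ne_nil _ (by simp)]
    simp [List.range_succ_eq_map]
  · by_cases hn1 : n = 1
    · subst hn1
      obtain ⟨m', rfl⟩ : ∃ m', m = m' + 1 := ⟨m - 1, by omega⟩
      simp [List.range_succ, List.getLast?_concat]
    · obtain ⟨n', hn'⟩ : ∃ n', n - 1 = n' + 1 := ⟨n - 2, by omega⟩
      rw [List.getLast?_append_of_ne_nil _ (by simp only [ne_eq, List.map_eq_nil_iff, List.range_eq_nil]; omega)]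
      rw [hn', List.range_succ]
      simp only [List.map_append, List.map_cons, List.map_nil, List.append_assoc]
      rw [List.getLast?_append_of_ne_nil _ (by simp)]
      simp only [List.getLast?_concat, List.getLast?_singleton]
      have : n' + 2 = n := by omega
      rw [this]
  · rw [List.Chain', List.isChain_append]
    refine ⟨?_, ?_, ?_⟩
    · rw [List.isChain_map]
      cases m with
      | zero => simp
      | succ m' =>
        rw [List.isChain_range_succ]
        intro i hi
        exact ⟨Or.inr rfl, Or.inl rfl⟩
    · rw [List.isChain_map]
      cases hc : n - 1 with
      | zero => simp
      | succ n' =>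
        rw [List.isChain_range_succ]
        intro j hj
        exact ⟨Or.inl rfl, Or.inr rfl⟩
    · intro u hu v hv
      rw [List.getLast?_map] at hu
      rw [List.head?_map] at hv
      obtain ⟨m', rfl⟩ : ∃ m', m = m' + 1 := ⟨m - 1, by omega⟩
      rw [List.range_succ] at hu
      rw [List.getLast?_concat] at hu
      simp only [Option.map_some, Option.mem_def, Option.some.injEq] at hu
      subst hu
      cases hc : n - 1 with
      | zero => simp [hc] at hv
      | succ n' =>
        rw [hc] at hv
        rw [List.range_succ_eq_map] at hv
        simp only [List.head?_cons, Option.map_some, Option.mem_def, Option.some.injEq] at hv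
        subst hv
        exact ⟨Or.inl rfl, Or.inr rfl⟩
  · rw [List.Chain', List.isChain_append]
    refine ⟨?_, ?_, ?_⟩
    · rw [List.isChain_map]
      cases m with
      | zero => simp
      | succ m' =>
        rw [List.isChain_range_succ]
        intro i hi
        simp [Prod.ext_iff]
    · rw [List.isChain_map]
      cases hc : n - 1 with
      | zero => simp
      | succ n' =>
        rw [List.isChain_range_succ]
        intro j hj
        simp [Prod.ext_iff]
    · intro u hu v hv
      rw [List.getLast?_map] at hu
      rw [List.head?_map] at hv
      obtain ⟨m', rfl⟩ : ∃ m', m = m' + 1 := ⟨m - 1, by omega⟩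
      rw [List.range_succ, List.getLast?_concat] at hu
      simp only [Option.map_some, Option.mem_def, Option.some.injEq] at hu
      subst hu
      cases hc : n - 1 with
      | zero => simp [hc] at hv
      | succ n' =>
        rw [hc, List.range_succ_eq_map] at hv
        simp only [List.head?_cons, Option.map_some, Option.mem_def, Option.some.injEq] at hv
        subst hv
        simp [Prod.ext_iff]

private lemma head?_getD {l : List ℕ} {a : ℕ} (h : l.head? = some a) (d : ℕ) :
    l.getD 0 d = a := by
  cases l with
  | nil => simp at h
  | cons b t => simpa using Option.some.inj h

private lemma getLast?_getD {l : List ℕ} {a : ℕ} (h : l.getLast? = some a) (d : ℕ) :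
    l.getD (l.length - 1) d = a := by
  rcases List.eq_nil_or_concat l with rfl | ⟨l', b, rfl⟩
  · simp at h
  · rw [List.concat_eq_append, List.getLast?_concat] at h
    have hb := Option.some.inj h
    subst hb
    simp [List.getD_append_right]

private lemma transport {y z x : List ℝ} {F : List ℕ}
    (hFlen : F.length = x.length)
    (hFval : ∀ i < F.length, F.getD i 0 < y.length ∧ x.getD i 0 = y.getD (F.getD i 0) 0)
    (hFhead : F.head? = some 0)
    (hFlast : F.getLast? = some (y.length - 1))
    (hFchain : List.Chain' (fun a b => b = a ∨ b = a + 1) F)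
    (hy : y ≠ [])
    {p : List (ℕ × ℕ)} (hp : IsWarpingPath x.length z.length p) :
    ∃ q, IsWarpingPath y.length z.length q ∧ warpCost y z q ≤ warpCost x z p := by
  classical
  set g : ℕ × ℕ → ℕ × ℕ := fun q => (F.getD (q.1 - 1) 0 + 1, q.2) with hg
  have hbounds := walk_bounds hp.1
  have hm : 1 ≤ x.length := (walk_pos hp.1).1
  have hwalk : IsWarpingWalk y.length z.length (p.map g) := by
    refine ⟨?_, ?_, ?_⟩
    · rw [List.head?_map, hp.1.1]
      simp only [Option.map_some, Option.some.injEq, hg]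
      rw [head?_getD hFhead]
    · rw [List.getLast?_map, hp.1.2.1]
      simp only [Option.map_some, Option.some.injEq, hg]
      rw [← hFlen, getLast?_getD hFlast]
      have : 1 ≤ y.length := List.length_pos_iff.mpr hy
      rw [Prod.ext_iff]
      exact ⟨by omega, rfl⟩
    · rw [List.Chain', List.isChain_map, List.isChain_iff_getElem]
      intro i hi
      set a := p[i] with ha
      set b := p[i + 1] with hb
      have hab := List.isChain_iff_getElem.mp hp.1.2.2 i hi
      rw [← ha, ← hb] at hab
      have hba := hbounds a (by rw [ha]; exact List.getElem_mem _)
      have hbb := hbounds b (by rw [hb]; exact List.getElem_mem _)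
      refine ⟨?_, hab.2⟩
      rcases hab.1 with h1 | h1
      · left; simp only [hg, h1]
      · have ha1 : 1 ≤ a.1 := hba.1
        have hb1 : b.1 ≤ x.length := hbb.2.1
        have hidx : a.1 - 1 < F.length - 1 := by omega
        have hstep := List.isChain_iff_getElem.mp hFchain (a.1 - 1) (by omega)
        rw [← List.getD_eq_getElem F 0 (by omega), ← List.getD_eq_getElem F 0 (by omega)]
          at hstep
        have hbi : b.1 - 1 = a.1 - 1 + 1 := by omega
        simp only [hg, hbi]
        rcases hstep with h2 | h2
        · left; rw [h2]
        · right; rw [h2]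
  refine ⟨ddup (p.map g), ⟨⟨?_, ?_, ?_⟩, ddup_ne _⟩, ?_⟩
  · rw [ddup_head?]; exact hwalk.1
  · rw [ddup_getLast?]; exact hwalk.2.1
  · exact ddup_chain' _ hwalk.2.2
  · have h1 : warpCost y z (ddup (p.map g)) ≤ warpCost y z (p.map g) := by
      unfold warpCost
      refine List.Sublist.sum_le_sum ((ddup_sublist _).map _) ?_
      intro r hr
      obtain ⟨q, -, rfl⟩ := List.mem_map.mp hr
      positivity
    have h2 : warpCost y z (p.map g) = warpCost x z p := by
      unfold warpCost
      rw [List.map_map]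
      congr 1
      refine List.map_congr_left ?_
      intro q hq
      have hbq := hbounds q hq
      have hq1 : q.1 - 1 < F.length := by rw [hFlen]; omega
      have := (hFval (q.1 - 1) hq1).2
      simp only [Function.comp, hg, Nat.add_sub_cancel]
      rw [this]
    rw [← h2]; exact h1


/-- If `x` is an expansion of `y`, then `dtw(x,z) ≥ dtw(y,z)` for every time
series `z`, and `dtw(x,y) = 0`. -/
theorem expansion_inequality {x y : List ℝ} (hxy : IsExpansion x y) :
    (∀ z : List ℝ, dtw y z ≤ dtw x z) ∧ dtw x y = 0 := by
  obtain ⟨ns, hlen, hpos, hx⟩ := hxy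
  obtain ⟨F, hFlen, hFval, hFhead, hFlast, hFchain⟩ := expansion_F hlen hpos
  rw [← hx] at hFlen hFval
  have hyx : y = [] → x = [] := by
    intro h
    subst h
    have : ns = [] := List.eq_nil_of_length_eq_zero (by simpa using hlen)
    simp [hx, this]
  have hxy' : x = [] → y = [] := by
    intro h
    by_contra hy
    have h1 := hFhead hy
    have : F = [] := List.eq_nil_of_length_eq_zero (by simp [hFlen, h])
    rw [this] at h1
    simp at h1
  have hbdd : ∀ u v : List ℝ, BddBelow {r : ℝ | ∃ p, IsWarpingPath u.length v.length p ∧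
      r = Real.sqrt (warpCost u v p)} := by
    intro u v
    refine ⟨0, fun r hr => ?_⟩
    obtain ⟨p, hp, rfl⟩ := hr
    exact Real.sqrt_nonneg _
  have hnonneg : ∀ u v : List ℝ, 0 ≤ dtw u v := by
    intro u v
    exact Real.sInf_nonneg (fun r hr => by obtain ⟨p, hp, rfl⟩ := hr; exact Real.sqrt_nonneg _)
  constructor
  · intro z
    by_cases hz : z = []
    · have : {r : ℝ | ∃ p, IsWarpingPath y.length z.length p ∧
          r = Real.sqrt (warpCost y z p)} = ∅ := by
        rw [Set.eq_empty_iff_forall_notMem]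
        rintro r ⟨p, hp, -⟩
        have := (walk_pos hp.1).2
        rw [hz] at this
        simp at this
      rw [dtw, this, Real.sInf_empty]
      exact hnonneg x z
    · by_cases hx0 : x = []
      · have hy0 : y = [] := hxy' hx0
        have : {r : ℝ | ∃ p, IsWarpingPath y.length z.length p ∧
            r = Real.sqrt (warpCost y z p)} = ∅ := by
          rw [Set.eq_empty_iff_forall_notMem]
          rintro r ⟨p, hp, -⟩
          have := (walk_pos hp.1).1
          rw [hy0] at this
          simp at this
        rw [dtw, this, Real.sInf_empty]
        exact hnonneg x z
      · have hy0 : y ≠ [] := fun h => hx0 (hyx h)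
        have hm : 1 ≤ x.length := List.length_pos_iff.mpr hx0
        have hn : 1 ≤ z.length := List.length_pos_iff.mpr hz
        obtain ⟨p0, hp0⟩ := stair_exists x.length z.length hm hn
        refine le_csInf ⟨Real.sqrt (warpCost x z p0), p0, hp0, rfl⟩ ?_
        rintro r ⟨p, hp, rfl⟩
        obtain ⟨q, hq, hle⟩ := transport hFlen hFval (hFhead hy0) (hFlast hy0) hFchain hy0 hp
        refine le_trans (csInf_le (hbdd y z) ⟨q, hq, rfl⟩) (Real.sqrt_le_sqrt hle)
  · by_cases hx0 : x = []
    · have hy0 : y = [] := hxy' hx0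
      have : {r : ℝ | ∃ p, IsWarpingPath x.length y.length p ∧
          r = Real.sqrt (warpCost x y p)} = ∅ := by
        rw [Set.eq_empty_iff_forall_notMem]
        rintro r ⟨p, hp, -⟩
        have := (walk_pos hp.1).1
        rw [hx0] at this
        simp at this
      rw [dtw, this, Real.sInf_empty]
    · have hy0 : y ≠ [] := fun h => hx0 (hyx h)
      obtain ⟨m', hm'⟩ : ∃ m', x.length = m' + 1 :=
        ⟨x.length - 1, by have := List.length_pos_iff.mpr hx0; omega⟩
      have hylen : 1 ≤ y.length := List.length_pos_iff.mpr hy0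
      set f : ℕ → ℕ × ℕ := fun i => (i + 1, F.getD i 0 + 1) with hf
      have hpath : IsWarpingPath x.length y.length ((List.range x.length).map f) := by
        refine ⟨⟨?_, ?_, ?_⟩, ?_⟩
        · rw [List.head?_map, hm', List.range_succ_eq_map]
          simp only [List.head?_cons, Option.map_some, Option.some.injEq, hf]
          rw [head?_getD (hFhead hy0)]
        · rw [List.getLast?_map, hm', List.range_succ, List.getLast?_concat]
          simp only [Option.map_some, Option.some.injEq, hf]
          have : F.getD m' 0 = y.length - 1 := by
            have := getLast?_getD (hFlast hy0) 0
            rwa [hFlen, hm', Nat.add_sub_cancel] at this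
          rw [this, Prod.ext_iff]
          refine ⟨rfl, by simp; omega⟩
        · rw [List.Chain', List.isChain_map, hm', List.isChain_range_succ]
          intro i hi
          refine ⟨Or.inr rfl, ?_⟩
          have hidx : i < F.length - 1 := by rw [hFlen]; omega
          have hstep := List.isChain_iff_getElem.mp hFchain i (by omega)
          rw [← List.getD_eq_getElem F 0 (by omega), ← List.getD_eq_getElem F 0 (by omega)]
            at hstep
          simp only [hf]
          rcases hstep with h2 | h2
          · left; rw [h2]
          · right; rw [h2]
        · rw [List.Chain', List.isChain_map, hm', List.isChain_range_succ]
          intro i hi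
          simp only [hf, ne_eq, Prod.mk.injEq]
          rintro ⟨h1, -⟩
          omega
      have hcost : warpCost x y ((List.range x.length).map f) = 0 := by
        unfold warpCost
        refine List.sum_eq_zero ?_
        intro r hr
        rw [List.map_map] at hr
        obtain ⟨i, hi, rfl⟩ := List.mem_map.mp hr
        rw [List.mem_range] at hi
        have hiF : i < F.length := by rw [hFlen]; exact hi
        have := (hFval i hiF).2
        simp only [Function.comp, hf, Nat.add_sub_cancel, this, sub_self]
        simp
      refine le_antisymm ?_ (hnonneg x y)
      refine csInf_le (hbdd x y) ?_
      refine ⟨(List.range x.length).map f, hpath, ?_⟩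
      rw [hcost, Real.sqrt_zero]
end
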